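/- arXiv:2103.04579 — 3 statements merged into one kernel-verified Lean document; each statement's English description precedes it below -/
import Mathlib

section
/- Let n, n_y, q be natural numbers with n_y - 2q > 0, and let W ⊆ {1, ..., n_y} with card(W) ≤ q. Let x : ℕ → ℝⁿ be the true state trajectory, and for each subset J of {1, ..., n_y} with card(J) = n_y - q or card(J) = n_y - 2q, let x̂_J : ℕ → ℝⁿ be an estimate trajectory. Set e₀ = max over all such J of ‖x̂_J(0) - x(0)‖ (Euclidean norm). Assume that for every such J with J ∩ W = ∅ there exists a class-KL function β_J such that ‖x̂_J(k) - x(k)‖ ≤ β_J(e₀, k) for all k ∈ ℕ. For each J with card(J) = n_y - q define π_J(k) = max over all S ⊆ J with card(S) = n_y - 2q of ‖x̂_J(k) - x̂_S(k)‖, and let σ : ℕ → {subsets of {1, ..., n_y}} be any selection with card(σ(k)) = n_y - q and π_{σ(k)}(k) ≤ π_J(k) for every J with card(J) = n_y - q. Then there exists a class-KL function β̄ such that ‖x̂_{σ(k)}(k) - x(k)‖ ≤ β̄(e₀, k) for all k ∈ ℕ. -/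
/-! Let `b(k)` be the sum of the KL bounds of all attack-free observers, evaluated at `(e₀, k)`.
Since at most `q` sensors are attacked, some `J₀` of size `n_y - q` is attack-free, and every
`J` of size `n_y - q` contains an attack-free `S` of size `n_y - 2q`. Comparing both `x̂_{J₀}`
and its subsets with `x` gives `π_{J₀} ≤ 2b`; then
`‖x̂_{σ(k)} - x‖ ≤ π_{σ(k)} + ‖x̂_S - x‖ ≤ π_{J₀} + b ≤ 3b`, and `3b` is again of class KL. -/

/-- A function `β : ℝ → ℕ → ℝ` is of class KL if, for each fixed `k`, the map
`r ↦ β r k` is continuous and strictly increasing on `[0, ∞)` with `β 0 k = 0`,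
and for each fixed `r ≥ 0`, the map `k ↦ β r k` is nonincreasing and tends to `0`
as `k → ∞`. -/
def IsClassKL (β : ℝ → ℕ → ℝ) : Prop :=
  (∀ k : ℕ, ContinuousOn (fun r => β r k) (Set.Ici (0 : ℝ)) ∧
      StrictMonoOn (fun r => β r k) (Set.Ici (0 : ℝ)) ∧ β 0 k = 0) ∧
  (∀ r : ℝ, 0 ≤ r →
      Antitone (fun k => β r k) ∧
      Filter.Tendsto (fun k => β r k) Filter.atTop (nhds 0))

namespace IsClassKL

theorem const_mul {β : ℝ → ℕ → ℝ} (hβ : IsClassKL β) {c : ℝ} (hc : 0 < c) :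
    IsClassKL fun r k => c * β r k := by
  refine ⟨fun k => ?_, fun r hr => ?_⟩
  · obtain ⟨hcont, hmono, hzero⟩ := hβ.1 k
    exact ⟨continuousOn_const.mul hcont,
      fun a ha b hb hab => mul_lt_mul_of_pos_left (hmono ha hb hab) hc, by simp [hzero]⟩
  · obtain ⟨hanti, hlim⟩ := hβ.2 r hr
    exact ⟨fun k₁ k₂ hk => mul_le_mul_of_nonneg_left (hanti hk) hc.le,
      by simpa using hlim.const_mul c⟩

theorem finset_sum {ι : Type*} {s : Finset ι} (hs : s.Nonempty) {β : ι → ℝ → ℕ → ℝ}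
    (hβ : ∀ i ∈ s, IsClassKL (β i)) : IsClassKL fun r k => ∑ i ∈ s, β i r k := by
  refine ⟨fun k => ⟨?_, ?_, ?_⟩, fun r hr => ⟨?_, ?_⟩⟩
  · exact continuousOn_finsetSum s fun i hi => ((hβ i hi).1 k).1
  · exact fun a ha b hb hab =>
      Finset.sum_lt_sum_of_nonempty hs fun i hi => ((hβ i hi).1 k).2.1 ha hb hab
  · exact Finset.sum_eq_zero fun i hi => ((hβ i hi).1 k).2.2
  · exact fun k₁ k₂ hk => Finset.sum_le_sum fun i hi => ((hβ i hi).2 r hr).1 hk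
  · simpa using tendsto_finsetSum s fun i hi => ((hβ i hi).2 r hr).2

end IsClassKL

theorem Finset.exists_subset_disjoint_card_eq {α : Type*} [DecidableEq α] (T W : Finset α)
    {m : ℕ} (hm : m ≤ T.card - W.card) : ∃ S ⊆ T, Disjoint S W ∧ S.card = m := by
  obtain ⟨S, hS, rfl⟩ := Finset.exists_subset_card_eq (hm.trans (Finset.le_card_sdiff W T))
  exact ⟨S, hS.trans Finset.sdiff_subset,
    Finset.disjoint_of_subset_left hS Finset.sdiff_disjoint, rfl⟩

section MaxDeviation

variable {ι E : Type*} [SeminormedAddCommGroup E]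

/-- The paper's statistic `π_J(k)`, with `z S = x̂_S(k)` and `m = n_y - 2q`. -/
noncomputable def maxDeviation (z : Finset ι → E) (m : ℕ) (J : Finset ι) : ℝ :=
  sSup {r : ℝ | ∃ S : Finset ι, S ⊆ J ∧ S.card = m ∧ r = ‖z J - z S‖}

variable {z : Finset ι → E} {m : ℕ} {J S : Finset ι} {y : E} {b : ℝ}

theorem norm_sub_le_maxDeviation [Finite ι] (hSJ : S ⊆ J) (hS : S.card = m) :
    ‖z J - z S‖ ≤ maxDeviation z m J := by
  refine le_csSup ((Set.finite_range fun T : Finset ι => ‖z J - z T‖).bddAbove.mono ?_)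
    ⟨S, hSJ, hS, rfl⟩
  rintro _ ⟨T, -, -, rfl⟩
  exact ⟨T, rfl⟩

theorem maxDeviation_le_two_mul (hJ : ‖z J - y‖ ≤ b)
    (hsub : ∀ S ⊆ J, S.card = m → ‖z S - y‖ ≤ b) : maxDeviation z m J ≤ 2 * b := by
  refine Real.sSup_le ?_ (by linarith [(norm_nonneg _).trans hJ])
  rintro _ ⟨S, hSJ, hS, rfl⟩
  calc ‖z J - z S‖ ≤ ‖z J - y‖ + ‖z S - y‖ := by
        simpa only [dist_eq_norm] using dist_triangle_right (z J) (z S) y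
    _ ≤ 2 * b := by linarith [hsub S hSJ hS]

theorem norm_sub_le_three_mul_of_maxDeviation_le [Finite ι] {J₀ : Finset ι}
    (hmin : maxDeviation z m J ≤ maxDeviation z m J₀) (hJ₀ : ‖z J₀ - y‖ ≤ b)
    (hJ₀sub : ∀ S ⊆ J₀, S.card = m → ‖z S - y‖ ≤ b)
    (hSJ : S ⊆ J) (hScard : S.card = m) (hS : ‖z S - y‖ ≤ b) : ‖z J - y‖ ≤ 3 * b :=
  calc ‖z J - y‖ ≤ ‖z J - z S‖ + ‖z S - y‖ := norm_sub_le_norm_sub_add_norm_sub _ _ _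
    _ ≤ maxDeviation z m J₀ + b :=
      add_le_add ((norm_sub_le_maxDeviation hSJ hScard).trans hmin) hS
    _ ≤ 2 * b + b := by gcongr; exact maxDeviation_le_two_mul hJ₀ hJ₀sub
    _ = 3 * b := by ring

end MaxDeviation

theorem complete_multiobserver_estimator_KL_bound_general
    (n n_y q : ℕ)
    (W : Finset (Fin n_y)) (hW : W.card ≤ q)
    (x : ℕ → EuclideanSpace ℝ (Fin n))
    (xhat : Finset (Fin n_y) → ℕ → EuclideanSpace ℝ (Fin n))
    (e₀ : ℝ)
    (hstable : ∀ J : Finset (Fin n_y),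
      (J.card = n_y - q ∨ J.card = n_y - 2 * q) → J ∩ W = ∅ →
      ∃ β : ℝ → ℕ → ℝ, IsClassKL β ∧ ∀ k : ℕ, ‖xhat J k - x k‖ ≤ β e₀ k)
    (π : Finset (Fin n_y) → ℕ → ℝ)
    (hπ : ∀ (J : Finset (Fin n_y)) (k : ℕ), J.card = n_y - q →
      π J k = sSup {r : ℝ | ∃ S : Finset (Fin n_y),
        S ⊆ J ∧ S.card = n_y - 2 * q ∧ r = ‖xhat J k - xhat S k‖})
    (σ : ℕ → Finset (Fin n_y))
    (hσcard : ∀ k : ℕ, (σ k).card = n_y - q)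
    (hσmin : ∀ (k : ℕ) (J : Finset (Fin n_y)), J.card = n_y - q →
      π (σ k) k ≤ π J k) :
    ∃ βbar : ℝ → ℕ → ℝ, IsClassKL βbar ∧
      ∀ k : ℕ, ‖xhat (σ k) k - x k‖ ≤ βbar e₀ k := by
  classical
  choose! β hβKL hβbound using hstable
  set free : Finset (Finset (Fin n_y)) := {J | (J.card = n_y - q ∨ J.card = n_y - 2 * q) ∧
    J ∩ W = ∅}
  have mem_free {J} (hJ : J.card = n_y - q ∨ J.card = n_y - 2 * q) (hJW : Disjoint J W) :
      J ∈ free := by simp [free, hJ, Finset.disjoint_iff_inter_eq_empty.1 hJW]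
  have hfree_KL : ∀ J ∈ free, IsClassKL (β J) := fun J hJ =>
    hβKL J (Finset.mem_filter.1 hJ).2.1 (Finset.mem_filter.1 hJ).2.2
  have hfree_bound : ∀ J ∈ free, ∀ k, ‖xhat J k - x k‖ ≤ β J e₀ k := fun J hJ =>
    hβbound J (Finset.mem_filter.1 hJ).2.1 (Finset.mem_filter.1 hJ).2.2
  obtain ⟨J₀, -, hJ₀W, hJ₀⟩ := Finset.exists_subset_disjoint_card_eq Finset.univ W
    (m := n_y - q) (by simp only [Finset.card_univ, Fintype.card_fin]; omega)
  refine ⟨fun r k => 3 * ∑ J ∈ free, β J r k,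
    (IsClassKL.finset_sum ⟨J₀, mem_free (.inl hJ₀) hJ₀W⟩ hfree_KL).const_mul three_pos,
    fun k => ?_⟩
  have hle_sum : ∀ J ∈ free, ‖xhat J k - x k‖ ≤ ∑ J ∈ free, β J e₀ k := fun J hJ =>
    (hfree_bound J hJ k).trans <| Finset.single_le_sum
      (fun J' hJ' => (norm_nonneg _).trans (hfree_bound J' hJ' k)) hJ
  obtain ⟨S, hSσ, hSW, hS⟩ := Finset.exists_subset_disjoint_card_eq (σ k) W
    (m := n_y - 2 * q) (by rw [hσcard k]; omega)
  refine norm_sub_le_three_mul_of_maxDeviation_le (z := fun J => xhat J k) (J₀ := J₀)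
    ?_ (hle_sum J₀ (mem_free (.inl hJ₀) hJ₀W))
    (fun S hS₀ hS => hle_sum S (mem_free (.inr hS) (hJ₀W.mono_left hS₀))) hSσ hS
    (hle_sum S (mem_free (.inr hS) hSW))
  simpa only [maxDeviation, ← hπ _ _ (hσcard k), ← hπ _ _ hJ₀] using hσmin k J₀ hJ₀

/-- Theorem 1 of the paper: the multi-observer estimator `x̂(k) = x̂_{σ(k)}(k)`,
where `σ(k)` minimizes the deviation statistic `π_J(k)` over all `J` of cardinality
`n_y - q`, has asymptotically stable estimation error despite sensor attacks. -/
theorem complete_multiobserver_estimator_KL_bound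
    (n n_y q : ℕ) (h1 : 0 < n_y - 2 * q)
    (W : Finset (Fin n_y)) (hW : W.card ≤ q)
    (x : ℕ → EuclideanSpace ℝ (Fin n))
    (xhat : Finset (Fin n_y) → ℕ → EuclideanSpace ℝ (Fin n))
    (e₀ : ℝ)
    (he₀ : e₀ = sSup {r : ℝ | ∃ J : Finset (Fin n_y),
      (J.card = n_y - q ∨ J.card = n_y - 2 * q) ∧ r = ‖xhat J 0 - x 0‖})
    (hstable : ∀ J : Finset (Fin n_y),
      (J.card = n_y - q ∨ J.card = n_y - 2 * q) → J ∩ W = ∅ →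
      ∃ β : ℝ → ℕ → ℝ, IsClassKL β ∧ ∀ k : ℕ, ‖xhat J k - x k‖ ≤ β e₀ k)
    (π : Finset (Fin n_y) → ℕ → ℝ)
    (hπ : ∀ (J : Finset (Fin n_y)) (k : ℕ), J.card = n_y - q →
      π J k = sSup {r : ℝ | ∃ S : Finset (Fin n_y),
        S ⊆ J ∧ S.card = n_y - 2 * q ∧ r = ‖xhat J k - xhat S k‖})
    (σ : ℕ → Finset (Fin n_y))
    (hσcard : ∀ k : ℕ, (σ k).card = n_y - q)
    (hσmin : ∀ (k : ℕ) (J : Finset (Fin n_y)), J.card = n_y - q →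
      π (σ k) k ≤ π J k) :
    ∃ βbar : ℝ → ℕ → ℝ, IsClassKL βbar ∧
      ∀ k : ℕ, ‖xhat (σ k) k - x k‖ ≤ βbar e₀ k :=
  complete_multiobserver_estimator_KL_bound_general n n_y q W hW x xhat e₀ hstable π hπ σ hσcard
    hσmin
end

section
/- Let n, n_u be natural numbers, A an n × n real matrix, B an n × n_u real matrix, and L an n_u × n real matrix with L · B = I (the n_u × n_u identity), and let f : ℝⁿ → ℝⁿ be Lipschitz continuous with some constant γ ≥ 0 with respect to the Euclidean norm. Let x, x̂ : ℕ → ℝⁿ and u, a_u : ℕ → ℝ^{n_u} satisfy x(k+1) = A·x(k) + f(x(k)) + B·(u(k) + a_u(k)) for all k ∈ ℕ, and suppose x̂(k) - x(k) → 0 as k → ∞. Define â_u(k+1) = L·(x̂(k+1) - A·x̂(k) - f(x̂(k))) - u(k). Then â_u(k+1) - a_u(k) → 0 as k → ∞. -/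
/-!
Subtracting the true dynamics from the reconstruction formula, the control input cancels and the
left inverse `L` removes `B`, so the reconstruction error is `L` applied to
`e(k+1) - A e(k) - (f(x̂(k)) - f(x(k)))`, where `e = x̂ - x` is the estimation error. Each of
these three terms tends to zero (the last by the Lipschitz bound), and `L` is continuous, so the
error tends to zero however large the attack itself is.
-/

open Filter Topology

section Reconstruction

variable {α E F U : Type*}

theorem tendsto_map_sub_map_of_norm_sub_le [SeminormedAddCommGroup E] [SeminormedAddCommGroup F]
    {f : E → F} {γ : ℝ} (hf : ∀ a b, ‖f a - f b‖ ≤ γ * ‖a - b‖) {l : Filter α} {a b : α → E}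
    (h : Tendsto (fun k => a k - b k) l (𝓝 0)) :
    Tendsto (fun k => f (a k) - f (b k)) l (𝓝 0) := by
  refine squeeze_zero_norm (fun k => hf (a k) (b k)) ?_
  simpa using (tendsto_zero_iff_norm_tendsto_zero.mp h).const_mul γ

theorem reconstruction_error_eq [AddCommGroup E] [AddCommGroup U] (A : E →+ E) (B : U → E)
    (L : E →+ U) (hLB : ∀ v, L (B v) = v) (f : E → E) {x₀ x₁ xhat₀ xhat₁ : E} {u a : U}
    (hdyn : x₁ = A x₀ + f x₀ + B (u + a)) :
    L (xhat₁ - A xhat₀ - f xhat₀) - u - a =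
      L ((xhat₁ - x₁) - A (xhat₀ - x₀) - (f xhat₀ - f x₀)) := by
  have hinput : L (x₁ - A x₀ - f x₀) = u + a := by
    rw [hdyn, sub_sub, add_sub_cancel_left, hLB]
  rw [sub_sub, ← hinput]
  simp only [map_sub]
  abel

variable {𝕜 : Type*} [NormedField 𝕜] [NormedAddCommGroup E] [NormedSpace 𝕜 E]
  [NormedAddCommGroup U] [NormedSpace 𝕜 U]

theorem tendsto_reconstruction_error (A : E →L[𝕜] E) (B : U → E) (L : E →L[𝕜] U)
    (hLB : ∀ v, L (B v) = v) {f : E → E} {γ : ℝ} (hf : ∀ a b, ‖f a - f b‖ ≤ γ * ‖a - b‖)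
    {x xhat : ℕ → E} {u a : ℕ → U} (hdyn : ∀ k, x (k + 1) = A (x k) + f (x k) + B (u k + a k))
    (hconv : Tendsto (fun k => xhat k - x k) atTop (𝓝 0)) :
    Tendsto (fun k => L (xhat (k + 1) - A (xhat k) - f (xhat k)) - u k - a k) atTop (𝓝 0) := by
  have hnext : Tendsto (fun k => xhat (k + 1) - x (k + 1)) atTop (𝓝 0) :=
    hconv.comp (tendsto_add_atTop_nat 1)
  have hlin : Tendsto (fun k => A (xhat k - x k)) atTop (𝓝 0) :=
    (A.continuous.tendsto' 0 0 (map_zero A)).comp hconv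
  have hnonlin := tendsto_map_sub_map_of_norm_sub_le hf hconv
  have hsum := (hnext.sub hlin).sub hnonlin
  rw [sub_zero, sub_zero] at hsum
  have herr := (L.continuous.tendsto' 0 0 (map_zero L)).comp hsum
  refine herr.congr fun k => ?_
  exact (reconstruction_error_eq A.toLinearMap.toAddMonoidHom B L.toLinearMap.toAddMonoidHom
    hLB f (hdyn k)).symm

end Reconstruction

theorem Matrix.toEuclideanLin_apply_toEuclideanLin_of_mul_eq_one {m n 𝕜 : Type*} [RCLike 𝕜]
    [Fintype m] [DecidableEq m] [Fintype n] [DecidableEq n] {L : Matrix n m 𝕜}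
    {B : Matrix m n 𝕜} (hLB : L * B = 1) (v : EuclideanSpace 𝕜 n) :
    Matrix.toEuclideanLin L (Matrix.toEuclideanLin B v) = v := by
  rw [← LinearMap.comp_apply, ← Matrix.toLpLin_mul_same, hLB, Matrix.toLpLin_one,
    LinearMap.id_apply]

theorem actuator_attack_asymptotic_reconstruction_general
    (n n_u : ℕ)
    (A : Matrix (Fin n) (Fin n) ℝ) (B : Matrix (Fin n) (Fin n_u) ℝ)
    (L : Matrix (Fin n_u) (Fin n) ℝ) (hLB : L * B = 1)
    (f : EuclideanSpace ℝ (Fin n) → EuclideanSpace ℝ (Fin n))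
    (γ : ℝ)
    (hf : ∀ x₁ x₂ : EuclideanSpace ℝ (Fin n), ‖f x₁ - f x₂‖ ≤ γ * ‖x₁ - x₂‖)
    (x xhat : ℕ → EuclideanSpace ℝ (Fin n))
    (u a_u : ℕ → EuclideanSpace ℝ (Fin n_u))
    (hdyn : ∀ k : ℕ, x (k + 1) =
      Matrix.toEuclideanLin A (x k) + f (x k) + Matrix.toEuclideanLin B (u k + a_u k))
    (hconv : Filter.Tendsto (fun k : ℕ => xhat k - x k) Filter.atTop (nhds 0))
    (ahat_u : ℕ → EuclideanSpace ℝ (Fin n_u))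
    (hahat : ∀ k : ℕ, ahat_u (k + 1) =
      Matrix.toEuclideanLin L
        (xhat (k + 1) - Matrix.toEuclideanLin A (xhat k) - f (xhat k)) - u k) :
    Filter.Tendsto (fun k : ℕ => ahat_u (k + 1) - a_u k) Filter.atTop (nhds 0) := by
  simp only [hahat]
  exact tendsto_reconstruction_error (Matrix.toEuclideanLin A).toContinuousLinearMap
    (Matrix.toEuclideanLin B) (Matrix.toEuclideanLin L).toContinuousLinearMap
    (Matrix.toEuclideanLin_apply_toEuclideanLin_of_mul_eq_one hLB) hf hdyn hconv

/-- Actuator attack reconstruction (Section III of the paper): given any asymptotically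
correct state estimate `x̂` of the Lipschitz nonlinear system
`x⁺ = A x + f(x) + B (u + a_u)`, the formula
`â_u(k+1) = L (x̂(k+1) - A x̂(k) - f(x̂(k))) - u(k)`, with `L` a left inverse of the
full-column-rank matrix `B`, asymptotically reconstructs the actuator attack signal
with one-step delay. -/
theorem actuator_attack_asymptotic_reconstruction
    (n n_u : ℕ)
    (A : Matrix (Fin n) (Fin n) ℝ) (B : Matrix (Fin n) (Fin n_u) ℝ)
    (L : Matrix (Fin n_u) (Fin n) ℝ) (hLB : L * B = 1)
    (f : EuclideanSpace ℝ (Fin n) → EuclideanSpace ℝ (Fin n))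
    (γ : ℝ) (hγ : 0 ≤ γ)
    (hf : ∀ x₁ x₂ : EuclideanSpace ℝ (Fin n), ‖f x₁ - f x₂‖ ≤ γ * ‖x₁ - x₂‖)
    (x xhat : ℕ → EuclideanSpace ℝ (Fin n))
    (u a_u : ℕ → EuclideanSpace ℝ (Fin n_u))
    (hdyn : ∀ k : ℕ, x (k + 1) =
      Matrix.toEuclideanLin A (x k) + f (x k) + Matrix.toEuclideanLin B (u k + a_u k))
    (hconv : Filter.Tendsto (fun k : ℕ => xhat k - x k) Filter.atTop (nhds 0))
    (ahat_u : ℕ → EuclideanSpace ℝ (Fin n_u))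
    (hahat : ∀ k : ℕ, ahat_u (k + 1) =
      Matrix.toEuclideanLin L
        (xhat (k + 1) - Matrix.toEuclideanLin A (xhat k) - f (xhat k)) - u k) :
    Filter.Tendsto (fun k : ℕ => ahat_u (k + 1) - a_u k) Filter.atTop (nhds 0) :=
  actuator_attack_asymptotic_reconstruction_general n n_u A B L hLB f γ hf x xhat u a_u hdyn hconv
    ahat_u hahat
end

section
/- Let n, n_u be natural numbers, A an n × n real matrix, B an n × n_u real matrix, and L an n_u × n real matrix with L · B = I, and let f : ℝⁿ → ℝⁿ be Lipschitz continuous with some constant γ ≥ 0 with respect to the Euclidean norm. Let x, x̂ : ℕ → ℝⁿ and u, a_u : ℕ → ℝ^{n_u} satisfy x(k+1) = A·x(k) + f(x(k)) + B·(u(k) + a_u(k)) for all k ∈ ℕ, and suppose x̂(k) - x(k) → 0 as k → ∞. Let W_u ⊆ {1, ..., n_u} and suppose that for every k ∈ ℕ and every i ∉ W_u, the i-th component of a_u(k) is zero. Define â_u(k+1) = L·(x̂(k+1) - A·x̂(k) - f(x̂(k))) - u(k). Then for every i ∉ W_u, the i-th component of â_u(k) tends to 0 as k → ∞. -/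
/-!
The one-step residual `r(k) = x(k+1) - A x(k) - f(x(k))` of the true state equals
`B (u(k) + a_u(k))`, so `L` maps it to `u(k) + a_u(k)` and `â_u(k+1) = a_u(k) + L (r̂(k) - r(k))`,
where `r̂` is the residual of `x̂`. The difference `r̂(k) - r(k)` is a linear image of `x̂ - x` at
times `k` and `k + 1` plus `f(x̂(k)) - f(x(k))`, so it tends to `0` by the Lipschitz bound; on an
attack-free actuator the component of `a_u(k)` is zero.
-/

open Filter Topology

lemma tendsto_sub_comp_of_norm_sub_le {ι E F : Type*} [SeminormedAddCommGroup E]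
    [SeminormedAddCommGroup F] {f : E → F} {γ : ℝ}
    (hf : ∀ x₁ x₂, ‖f x₁ - f x₂‖ ≤ γ * ‖x₁ - x₂‖) {l : Filter ι} {y x : ι → E}
    (h : Tendsto (fun k => y k - x k) l (𝓝 0)) :
    Tendsto (fun k => f (y k) - f (x k)) l (𝓝 0) :=
  squeeze_zero_norm (fun k => hf (y k) (x k)) (by simpa using h.norm.const_mul γ)

section StepResidual

variable {E : Type*} [NormedAddCommGroup E] [NormedSpace ℝ E] [FiniteDimensional ℝ E]

def stepResidual (A : E →ₗ[ℝ] E) (f : E → E) (y : ℕ → E) (k : ℕ) : E :=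
  y (k + 1) - A (y k) - f (y k)

lemma tendsto_stepResidual_sub (A : E →ₗ[ℝ] E) {f : E → E} {γ : ℝ}
    (hf : ∀ x₁ x₂, ‖f x₁ - f x₂‖ ≤ γ * ‖x₁ - x₂‖) {y x : ℕ → E}
    (h : Tendsto (fun k => y k - x k) atTop (𝓝 0)) :
    Tendsto (fun k => stepResidual A f y k - stepResidual A f x k) atTop (𝓝 0) := by
  have hA : Tendsto (fun k => A (y k - x k)) atTop (𝓝 0) :=
    A.continuous_of_finiteDimensional.tendsto' 0 0 (map_zero A) |>.comp h
  have hsum := ((h.comp (tendsto_add_atTop_nat 1)).sub hA).sub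
    (tendsto_sub_comp_of_norm_sub_le hf h)
  rw [sub_zero, sub_zero] at hsum
  refine hsum.congr fun k => ?_
  simp only [Function.comp_apply, stepResidual, map_sub]
  abel

end StepResidual

theorem actuator_attack_isolation_general
    (n n_u : ℕ)
    (A : Matrix (Fin n) (Fin n) ℝ) (B : Matrix (Fin n) (Fin n_u) ℝ)
    (L : Matrix (Fin n_u) (Fin n) ℝ) (hLB : L * B = 1)
    (f : EuclideanSpace ℝ (Fin n) → EuclideanSpace ℝ (Fin n))
    (γ : ℝ)
    (hf : ∀ x₁ x₂ : EuclideanSpace ℝ (Fin n), ‖f x₁ - f x₂‖ ≤ γ * ‖x₁ - x₂‖)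
    (x xhat : ℕ → EuclideanSpace ℝ (Fin n))
    (u a_u : ℕ → EuclideanSpace ℝ (Fin n_u))
    (hdyn : ∀ k : ℕ, x (k + 1) =
      Matrix.toEuclideanLin A (x k) + f (x k) + Matrix.toEuclideanLin B (u k + a_u k))
    (hconv : Filter.Tendsto (fun k : ℕ => xhat k - x k) Filter.atTop (nhds 0))
    (W_u : Finset (Fin n_u))
    (hsupp : ∀ k : ℕ, ∀ i : Fin n_u, i ∉ W_u → a_u k i = 0)
    (ahat_u : ℕ → EuclideanSpace ℝ (Fin n_u))
    (hahat : ∀ k : ℕ, ahat_u (k + 1) =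
      Matrix.toEuclideanLin L
        (xhat (k + 1) - Matrix.toEuclideanLin A (xhat k) - f (xhat k)) - u k) :
    ∀ i : Fin n_u, i ∉ W_u →
      Filter.Tendsto (fun k : ℕ => ahat_u k i) Filter.atTop (nhds 0) := by
  intro i hi
  set r := stepResidual (Matrix.toEuclideanLin A) f
  have hres_x (k : ℕ) : r x k = Matrix.toEuclideanLin B (u k + a_u k) := by
    simp only [r, stepResidual, hdyn k]
    abel
  have hLB_apply (w : EuclideanSpace ℝ (Fin n_u)) :
      Matrix.toEuclideanLin L (Matrix.toEuclideanLin B w) = w := by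
    rw [← LinearMap.comp_apply, ← Matrix.toLpLin_mul, hLB, Matrix.toLpLin_one, LinearMap.id_apply]
  have hahat_eq (k : ℕ) :
      ahat_u (k + 1) = a_u k + Matrix.toEuclideanLin L (r xhat k - r x k) := by
    rw [hahat k, hres_x, map_sub _ (r xhat k), hLB_apply]
    simp only [r, stepResidual]
    abel
  have hLres : Tendsto (fun k => Matrix.toEuclideanLin L (r xhat k - r x k) i) atTop (𝓝 0) :=
    (EuclideanSpace.proj i).continuous.tendsto' 0 0 rfl |>.comp <|
      (Matrix.toEuclideanLin L).continuous_of_finiteDimensional.tendsto' 0 0 (map_zero _)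
        |>.comp (tendsto_stepResidual_sub _ hf hconv)
  refine (tendsto_add_atTop_iff_nat 1).mp (hLres.congr fun k => ?_)
  rw [hahat_eq k, PiLp.add_apply, hsupp k i hi, zero_add]

/-- Actuator attack isolation (equation (30) of the paper): if `supp(a_u(k)) ⊆ W_u`
for all `k` and the state estimate is asymptotically correct, then the components of
the reconstructed actuator attack
`â_u(k+1) = L (x̂(k+1) - A x̂(k) - f(x̂(k))) - u(k)` corresponding to attack-free
actuators vanish asymptotically. -/
theorem actuator_attack_isolation
    (n n_u : ℕ)
    (A : Matrix (Fin n) (Fin n) ℝ) (B : Matrix (Fin n) (Fin n_u) ℝ)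
    (L : Matrix (Fin n_u) (Fin n) ℝ) (hLB : L * B = 1)
    (f : EuclideanSpace ℝ (Fin n) → EuclideanSpace ℝ (Fin n))
    (γ : ℝ) (hγ : 0 ≤ γ)
    (hf : ∀ x₁ x₂ : EuclideanSpace ℝ (Fin n), ‖f x₁ - f x₂‖ ≤ γ * ‖x₁ - x₂‖)
    (x xhat : ℕ → EuclideanSpace ℝ (Fin n))
    (u a_u : ℕ → EuclideanSpace ℝ (Fin n_u))
    (hdyn : ∀ k : ℕ, x (k + 1) =
      Matrix.toEuclideanLin A (x k) + f (x k) + Matrix.toEuclideanLin B (u k + a_u k))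
    (hconv : Filter.Tendsto (fun k : ℕ => xhat k - x k) Filter.atTop (nhds 0))
    (W_u : Finset (Fin n_u))
    (hsupp : ∀ k : ℕ, ∀ i : Fin n_u, i ∉ W_u → a_u k i = 0)
    (ahat_u : ℕ → EuclideanSpace ℝ (Fin n_u))
    (hahat : ∀ k : ℕ, ahat_u (k + 1) =
      Matrix.toEuclideanLin L
        (xhat (k + 1) - Matrix.toEuclideanLin A (xhat k) - f (xhat k)) - u k) :
    ∀ i : Fin n_u, i ∉ W_u →
      Filter.Tendsto (fun k : ℕ => ahat_u k i) Filter.atTop (nhds 0) :=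
  actuator_attack_isolation_general n n_u A B L hLB f γ hf x xhat u a_u hdyn hconv W_u hsupp ahat_u
    hahat
end
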